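/- Let φ be the even T(E)-periodic solution of φ'' + V'(φ) = 0 with φ(0) = a(E), φ'(0) = 0 and T'(E) ≠ 0, and let v(t) = t φ'(t) + C ∂_E φ(t) with C = T(E)/T'(E). Then v is T-periodic: v(0) = v(T) and v'(0) = v'(T) = 0. -/

import Mathlib

open Real

/-- for the even `T(E)`-periodic family `φ(·;E)` of solutions of
`φ'' + V'(φ) = 0` with `T'(E₀) ≠ 0`, the function
`v(t) = t φ'(t) + C ∂_E φ(t)` with `C = T(E₀)/T'(E₀)` is `T`-periodic:
`v(0) = v(T)` and `v'(0) = v'(T) = 0`. -/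
theorem stmt9
    (V a T : ℝ → ℝ) (φ : ℝ → ℝ → ℝ) (E₀ : ℝ)
    (hV : ContDiff ℝ (⊤ : ℕ∞) V) (ha : ContDiff ℝ (⊤ : ℕ∞) a) (hT : ContDiff ℝ (⊤ : ℕ∞) T)
    (hφ : ContDiff ℝ (⊤ : ℕ∞) (fun p : ℝ × ℝ => φ p.1 p.2))
    (hODE : ∀ E t, deriv (deriv (φ E)) t + deriv V (φ E t) = 0)
    (hIC0 : ∀ E, φ E 0 = a E) (hIC1 : ∀ E, deriv (φ E) 0 = 0)
    (heven : ∀ E t, φ E (-t) = φ E t)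
    (hper : ∀ E t, φ E (t + T E) = φ E t)
    (hEnergy : ∀ E, V (a E) = E)
    (hVa : deriv V (a E₀) ≠ 0)
    (hT' : deriv T E₀ ≠ 0)
    (hid1 : deriv (fun E => φ E (T E₀)) E₀ = deriv a E₀)
    (hid2 : deriv (fun E => deriv (φ E) (T E₀)) E₀ = deriv V (a E₀) * deriv T E₀)
    (v : ℝ → ℝ)
    (hv : ∀ t, v t = t * deriv (φ E₀) t
      + (T E₀ / deriv T E₀) * deriv (fun E => φ E t) E₀) :
    v 0 = v (T E₀) ∧ deriv v 0 = 0 ∧ deriv v (T E₀) = 0 := by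
  set F : ℝ × ℝ → ℝ := fun p => φ p.1 p.2 with hFdef
  have hFd : ∀ q : ℝ × ℝ, HasFDerivAt F (fderiv ℝ F q) q :=
    fun q => (hφ.differentiable (by simp) q).hasFDerivAt
  have hf' : ContDiff ℝ (⊤ : ℕ∞) (fderiv ℝ F) := hφ.fderiv_right (by simp)
  have hf'd : ∀ q : ℝ × ℝ, HasFDerivAt (fderiv ℝ F) (fderiv ℝ (fderiv ℝ F) q) q :=
    fun q => (hf'.differentiable (by simp) q).hasFDerivAt
  have symm : ∀ (q v w : ℝ × ℝ),
      fderiv ℝ (fderiv ℝ F) q v w = fderiv ℝ (fderiv ℝ F) q w v :=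
    fun q v w => second_derivative_symmetric hFd (hf'd q) v w
  have line : ∀ (E t₀ : ℝ), HasDerivAt (fun t : ℝ => (E, t)) ((0 : ℝ), (1 : ℝ)) t₀ :=
    fun E t₀ => (hasDerivAt_const t₀ E).prodMk (hasDerivAt_id t₀)
  have lineE : ∀ (t E₁ : ℝ), HasDerivAt (fun E : ℝ => (E, t)) ((1 : ℝ), (0 : ℝ)) E₁ :=
    fun t E₁ => (hasDerivAt_id E₁).prodMk (hasDerivAt_const E₁ t)
  -- first-order partials
  have hDt : ∀ E t, HasDerivAt (φ E) (fderiv ℝ F (E, t) (0, 1)) t := by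
    intro E t
    exact (hFd (E, t)).comp_hasDerivAt t (line E t)
  have hDE : ∀ E t, HasDerivAt (fun E => φ E t) (fderiv ℝ F (E, t) (1, 0)) E := by
    intro E t
    exact (hFd (E, t)).comp_hasDerivAt E (lineE t E)
  -- second-order: derivative in t of p ↦ fderiv F p v
  have hGt : ∀ (w : ℝ × ℝ) (t : ℝ),
      HasDerivAt (fun s : ℝ => fderiv ℝ F (E₀, s) w)
        (fderiv ℝ (fderiv ℝ F) (E₀, t) (0, 1) w) t := by
    intro w t
    have h1 : HasFDerivAt (fun p : ℝ × ℝ => fderiv ℝ F p w)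
        ((ContinuousLinearMap.apply ℝ ℝ w).comp (fderiv ℝ (fderiv ℝ F) (E₀, t))) (E₀, t) :=
      (ContinuousLinearMap.apply ℝ ℝ w).hasFDerivAt.comp (E₀, t) (hf'd (E₀, t))
    exact h1.comp_hasDerivAt t (line E₀ t)
  have hGE : ∀ (w : ℝ × ℝ) (t : ℝ),
      HasDerivAt (fun E : ℝ => fderiv ℝ F (E, t) w)
        (fderiv ℝ (fderiv ℝ F) (E₀, t) (1, 0) w) E₀ := by
    intro w t
    have h1 : HasFDerivAt (fun p : ℝ × ℝ => fderiv ℝ F p w)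
        ((ContinuousLinearMap.apply ℝ ℝ w).comp (fderiv ℝ (fderiv ℝ F) (E₀, t))) (E₀, t) :=
      (ContinuousLinearMap.apply ℝ ℝ w).hasFDerivAt.comp (E₀, t) (hf'd (E₀, t))
    exact h1.comp_hasDerivAt E₀ (lineE t E₀)
  set Tv := T E₀ with hTv
  set C := T E₀ / deriv T E₀ with hC
  -- deriv (φ E₀) Tv = 0 by periodicity
  have hper0 : φ E₀ Tv = a E₀ := by
    have := hper E₀ 0
    rwa [zero_add, hIC0] at this
  have hu0 : fderiv ℝ F (E₀, 0) ((0:ℝ), (1:ℝ)) = 0 := by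
    rw [← (hDt E₀ 0).deriv]; exact hIC1 E₀
  have huT : fderiv ℝ F (E₀, Tv) ((0:ℝ), (1:ℝ)) = 0 := by
    have hshift : HasDerivAt (fun s => φ E₀ (s + Tv))
        (fderiv ℝ F (E₀, 0 + Tv) (0, 1) * 1) 0 :=
      (hDt E₀ (0 + Tv)).comp 0 ((hasDerivAt_id 0).add_const Tv)
    have heq : (fun s => φ E₀ (s + Tv)) = φ E₀ := funext fun s => hper E₀ s
    rw [heq] at hshift
    have := hshift.deriv
    rw [hIC1 E₀] at this
    have h0 : fderiv ℝ F (E₀, 0 + Tv) ((0:ℝ), (1:ℝ)) * 1 = 0 := this.symm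
    rw [mul_one, zero_add] at h0
    exact h0
  have hderivφT : deriv (φ E₀) Tv = 0 := by rw [(hDt E₀ Tv).deriv]; exact huT
  -- mixed second partial at t = 0 vanishes
  have hmix0 : fderiv ℝ (fderiv ℝ F) (E₀, 0) ((1:ℝ), (0:ℝ)) ((0:ℝ), (1:ℝ)) = 0 := by
    have hconst : (fun E : ℝ => fderiv ℝ F (E, 0) ((0:ℝ), (1:ℝ))) = fun _ => (0:ℝ) := by
      funext E
      rw [← (hDt E 0).deriv]; exact hIC1 E
    have := (hGE (0, 1) 0).deriv
    rw [hconst, deriv_const] at this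
    exact this.symm
  -- mixed second partial at t = Tv equals V'(a) T'
  have hmixT : fderiv ℝ (fderiv ℝ F) (E₀, Tv) ((1:ℝ), (0:ℝ)) ((0:ℝ), (1:ℝ))
      = deriv V (a E₀) * deriv T E₀ := by
    have hfun : (fun E : ℝ => deriv (φ E) Tv) = fun E => fderiv ℝ F (E, Tv) ((0:ℝ), (1:ℝ)) :=
      funext fun E => (hDt E Tv).deriv.symm ▸ rfl
    have := (hGE (0, 1) Tv).deriv
    rw [← hfun] at this
    rw [← this]
    exact hid2
  -- pure second t-partial equals -V'(φ)
  have htt : ∀ t, fderiv ℝ (fderiv ℝ F) (E₀, t) ((0:ℝ), (1:ℝ)) ((0:ℝ), (1:ℝ))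
      = - deriv V (φ E₀ t) := by
    intro t
    have hueq : deriv (φ E₀) = fun s => fderiv ℝ F (E₀, s) ((0:ℝ), (1:ℝ)) :=
      funext fun s => (hDt E₀ s).deriv
    have h1 := (hGt (0, 1) t).deriv
    rw [← hueq] at h1
    have h2 := hODE E₀ t
    linarith [h1, h2]
  -- expression for v
  have hvfun : ∀ t, v t = t * fderiv ℝ F (E₀, t) ((0:ℝ), (1:ℝ))
      + C * fderiv ℝ F (E₀, t) ((1:ℝ), (0:ℝ)) := by
    intro t
    rw [hv t, (hDt E₀ t).deriv, (hDE E₀ t).deriv]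
  have hvD : ∀ t, HasDerivAt v
      (fderiv ℝ F (E₀, t) ((0:ℝ), (1:ℝ))
        + t * fderiv ℝ (fderiv ℝ F) (E₀, t) (0, 1) (0, 1)
        + C * fderiv ℝ (fderiv ℝ F) (E₀, t) (0, 1) (1, 0)) t := by
    intro t
    have h1 : HasDerivAt (fun s : ℝ => s * fderiv ℝ F (E₀, s) ((0:ℝ), (1:ℝ))
        + C * fderiv ℝ F (E₀, s) ((1:ℝ), (0:ℝ)))
        ((1 * fderiv ℝ F (E₀, t) ((0:ℝ), (1:ℝ))
          + t * fderiv ℝ (fderiv ℝ F) (E₀, t) (0, 1) (0, 1))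
         + C * fderiv ℝ (fderiv ℝ F) (E₀, t) (0, 1) (1, 0)) t :=
      ((hasDerivAt_id t).mul (hGt (0, 1) t)).add ((hGt (1, 0) t).const_mul C)
    have h2 : v = fun s => s * fderiv ℝ F (E₀, s) ((0:ℝ), (1:ℝ))
        + C * fderiv ℝ F (E₀, s) ((1:ℝ), (0:ℝ)) := funext hvfun
    rw [← h2] at h1
    convert h1 using 1
    ring
  refine ⟨?_, ?_, ?_⟩
  · -- v 0 = v Tv
    have h0 : v 0 = C * deriv a E₀ := by
      rw [hv 0, zero_mul, zero_add]
      congr 1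
      have : (fun E => φ E 0) = a := funext hIC0
      rw [this]
    have hT1 : v Tv = C * deriv a E₀ := by
      rw [hv Tv, hderivφT, mul_zero, zero_add, hid1]
    rw [h0, hT1]
  · have := (hvD 0).deriv
    rw [hu0, zero_mul, symm _ (0,1) (1,0), hmix0] at this
    simpa using this
  · have := (hvD Tv).deriv
    rw [huT, symm _ (0,1) (1,0), hmixT, htt Tv, hper0] at this
    rw [this, hC]
    field_simp
    ring
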